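/- With the log-likelihood L(α1, α2, α3) = Σ_{i=1}^{n1} ln( f(s_i; α1+α3) * f(t_i; α2) ) + Σ_{i=1}^{n2} ln( f(u_i; α1) * f(v_i; α2+α3) ) + Σ_{i=1}^{n3} ln( a*b*α3*w_i^(b-1)*exp(-a*w_i^b*(exp(c*w_i^d)-1)+c*w_i^d)*(1+(c*d/b)*w_i^d-exp(-c*w_i^d))*G(w_i)^(α1+α2+α3-1) ), at any (α1, α2, α3) with α1, α2, α3 > 0 the second-order partial derivatives satisfy: ∂²L/∂α1² = -( n1/(α1+α3)² + n2/α1² ), ∂²L/∂α2² = -( n1/α2² + n2/(α2+α3)² ), ∂²L/∂α3² = -( n1/(α1+α3)² + n2/(α2+α3)² + n3/α3² ), ∂²L/∂α1∂α2 = 0, ∂²L/∂α1∂α3 = -n1/(α1+α3)², and ∂²L/∂α2∂α3 = -n2/(α2+α3)². -/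
import Mathlib

open Real

/-- Base CDF of the exponentiated generalized Weibull–Gompertz distribution. -/
noncomputable def G (a b c d x : ℝ) : ℝ :=
  1 - Real.exp (-(a * x ^ b * (Real.exp (c * x ^ d) - 1)))

/-- EGWGD(a,b,c,d,α) probability density. -/
noncomputable def egwgdPdf (a b c d α x : ℝ) : ℝ :=
  a * b * α * x ^ (b - 1) *
    Real.exp (-(a * x ^ b * (Real.exp (c * x ^ d) - 1)) + c * x ^ d) *
    (1 + (c * d / b) * x ^ d - Real.exp (-(c * x ^ d))) *
    (G a b c d x) ^ (α - 1)

/-- Log-likelihood of the BEGWGD sample. -/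
noncomputable def logLik (a b c d : ℝ) {n₁ n₂ n₃ : ℕ}
    (s t : Fin n₁ → ℝ) (u v : Fin n₂ → ℝ) (w : Fin n₃ → ℝ)
    (α₁ α₂ α₃ : ℝ) : ℝ :=
  (∑ i, Real.log (egwgdPdf a b c d (α₁ + α₃) (s i) * egwgdPdf a b c d α₂ (t i))) +
  (∑ i, Real.log (egwgdPdf a b c d α₁ (u i) * egwgdPdf a b c d (α₂ + α₃) (v i))) +
  (∑ i, Real.log (a * b * α₃ * (w i) ^ (b - 1) *
      Real.exp (-(a * (w i) ^ b * (Real.exp (c * (w i) ^ d) - 1)) + c * (w i) ^ d) *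
      (1 + (c * d / b) * (w i) ^ d - Real.exp (-(c * (w i) ^ d))) *
      (G a b c d (w i)) ^ (α₁ + α₂ + α₃ - 1)))

/-- The α-free positive factor of the density. -/
noncomputable def Cf (a b c d x : ℝ) : ℝ :=
  a * b * x ^ (b - 1) *
    Real.exp (-(a * x ^ b * (Real.exp (c * x ^ d) - 1)) + c * x ^ d) *
    (1 + (c * d / b) * x ^ d - Real.exp (-(c * x ^ d)))

lemma G_pos {a b c d x : ℝ} (ha : 0 < a) (hc : 0 < c) (hd : 0 < d) (hx : 0 < x) :
    0 < G a b c d x := by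
  have hxb : 0 < x ^ b := Real.rpow_pos_of_pos hx b
  have hxd : 0 < x ^ d := Real.rpow_pos_of_pos hx d
  have h1 : 1 < Real.exp (c * x ^ d) :=
    Real.one_lt_exp_iff.2 (by positivity)
  have hprod : 0 < a * x ^ b * (Real.exp (c * x ^ d) - 1) :=
    mul_pos (mul_pos ha hxb) (by linarith)
  have : Real.exp (-(a * x ^ b * (Real.exp (c * x ^ d) - 1))) < 1 := by
    rw [Real.exp_lt_one_iff]
    linarith
  unfold G; linarith

lemma Cf_pos {a b c d x : ℝ} (ha : 0 < a) (hb : 0 < b) (hc : 0 < c) (hd : 0 < d)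
    (hx : 0 < x) : 0 < Cf a b c d x := by
  have hxd : 0 < x ^ d := Real.rpow_pos_of_pos hx d
  have hxb : 0 < x ^ (b - 1) := Real.rpow_pos_of_pos hx (b - 1)
  have h2 : Real.exp (-(c * x ^ d)) < 1 := by
    rw [Real.exp_lt_one_iff]
    have : 0 < c * x ^ d := by positivity
    linarith
  have h3 : 0 < 1 + (c * d / b) * x ^ d - Real.exp (-(c * x ^ d)) := by
    have : 0 < (c * d / b) * x ^ d := by positivity
    linarith
  unfold Cf
  positivity

lemma pdf_eq (a b c d α x : ℝ) :
    egwgdPdf a b c d α x = Cf a b c d x * (α * (G a b c d x) ^ (α - 1)) := by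
  unfold egwgdPdf Cf; ring

lemma pdf_pos {a b c d α x : ℝ} (ha : 0 < a) (hb : 0 < b) (hc : 0 < c) (hd : 0 < d)
    (hα : 0 < α) (hx : 0 < x) : 0 < egwgdPdf a b c d α x := by
  rw [pdf_eq]
  have := Cf_pos ha hb hc hd hx
  have := Real.rpow_pos_of_pos (G_pos (b := b) ha hc hd hx) (α - 1)
  positivity

lemma log_pdf {a b c d α x : ℝ} (ha : 0 < a) (hb : 0 < b) (hc : 0 < c) (hd : 0 < d)
    (hα : 0 < α) (hx : 0 < x) :
    Real.log (egwgdPdf a b c d α x) =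
      Real.log (Cf a b c d x) + Real.log α + (α - 1) * Real.log (G a b c d x) := by
  have hCf := Cf_pos ha hb hc hd hx
  have hG := G_pos (b := b) ha hc hd hx
  rw [pdf_eq, Real.log_mul hCf.ne' (by positivity),
    Real.log_mul hα.ne' (Real.rpow_pos_of_pos hG _).ne', Real.log_rpow hG, add_assoc]

lemma log_wterm {a b c d α₃ β x : ℝ} (ha : 0 < a) (hb : 0 < b) (hc : 0 < c) (hd : 0 < d)
    (hα : 0 < α₃) (hx : 0 < x) :
    Real.log (a * b * α₃ * x ^ (b - 1) *
      Real.exp (-(a * x ^ b * (Real.exp (c * x ^ d) - 1)) + c * x ^ d) *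
      (1 + (c * d / b) * x ^ d - Real.exp (-(c * x ^ d))) *
      (G a b c d x) ^ (β - 1)) =
      Real.log (Cf a b c d x) + Real.log α₃ + (β - 1) * Real.log (G a b c d x) := by
  have hCf := Cf_pos ha hb hc hd hx
  have hG := G_pos (b := b) ha hc hd hx
  have : a * b * α₃ * x ^ (b - 1) *
      Real.exp (-(a * x ^ b * (Real.exp (c * x ^ d) - 1)) + c * x ^ d) *
      (1 + (c * d / b) * x ^ d - Real.exp (-(c * x ^ d))) *
      (G a b c d x) ^ (β - 1) = Cf a b c d x * (α₃ * (G a b c d x) ^ (β - 1)) := by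
    unfold Cf; ring
  rw [this, Real.log_mul hCf.ne' (by positivity),
    Real.log_mul hα.ne' (Real.rpow_pos_of_pos hG _).ne', Real.log_rpow hG, add_assoc]

lemma loglik_decomp (a b c d : ℝ) (ha : 0 < a) (hb : 0 < b) (hc : 0 < c) (hd : 0 < d)
    {n₁ n₂ n₃ : ℕ} (s t : Fin n₁ → ℝ) (u v : Fin n₂ → ℝ) (w : Fin n₃ → ℝ)
    (hst : ∀ i, 0 < s i ∧ s i < t i) (hvu : ∀ i, 0 < v i ∧ v i < u i)
    (hw : ∀ i, 0 < w i) :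
    ∃ A B C K : ℝ, ∀ α₁ α₂ α₃ : ℝ, 0 < α₁ → 0 < α₂ → 0 < α₃ →
      logLik a b c d s t u v w α₁ α₂ α₃ =
        (n₁ : ℝ) * Real.log (α₁ + α₃) + (n₂ : ℝ) * Real.log α₁ +
        (n₁ : ℝ) * Real.log α₂ + (n₂ : ℝ) * Real.log (α₂ + α₃) +
        (n₃ : ℝ) * Real.log α₃ + α₁ * A + α₂ * B + α₃ * C + K := by
  set lG := fun x => Real.log (G a b c d x) with hlG
  set lC := fun x => Real.log (Cf a b c d x) with hlC
  refine ⟨(∑ i, lG (s i)) + (∑ i, lG (u i)) + ∑ i, lG (w i),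
    (∑ i, lG (t i)) + (∑ i, lG (v i)) + ∑ i, lG (w i),
    (∑ i, lG (s i)) + (∑ i, lG (v i)) + ∑ i, lG (w i),
    (∑ i, (lC (s i) + lC (t i) - lG (s i) - lG (t i))) +
    (∑ i, (lC (u i) + lC (v i) - lG (u i) - lG (v i))) +
    (∑ i, (lC (w i) - lG (w i))), ?_⟩
  intro α₁ α₂ α₃ h1 h2 h3
  unfold logLik
  have e1 : ∀ i : Fin n₁, Real.log (egwgdPdf a b c d (α₁ + α₃) (s i) * egwgdPdf a b c d α₂ (t i)) =
      (lC (s i) + Real.log (α₁ + α₃) + (α₁ + α₃ - 1) * lG (s i)) +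
      (lC (t i) + Real.log α₂ + (α₂ - 1) * lG (t i)) := by
    intro i
    have hsi := (hst i).1
    have hti := hsi.trans (hst i).2
    rw [Real.log_mul (pdf_pos ha hb hc hd (by linarith) hsi).ne'
        (pdf_pos ha hb hc hd h2 hti).ne',
      log_pdf ha hb hc hd (by linarith) hsi, log_pdf ha hb hc hd h2 hti]
  have e2 : ∀ i : Fin n₂, Real.log (egwgdPdf a b c d α₁ (u i) * egwgdPdf a b c d (α₂ + α₃) (v i)) =
      (lC (u i) + Real.log α₁ + (α₁ - 1) * lG (u i)) +
      (lC (v i) + Real.log (α₂ + α₃) + (α₂ + α₃ - 1) * lG (v i)) := by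
    intro i
    have hvi := (hvu i).1
    have hui := hvi.trans (hvu i).2
    rw [Real.log_mul (pdf_pos ha hb hc hd h1 hui).ne'
        (pdf_pos ha hb hc hd (by linarith) hvi).ne',
      log_pdf ha hb hc hd h1 hui, log_pdf ha hb hc hd (by linarith) hvi]
  have e3 : ∀ i : Fin n₃, Real.log (a * b * α₃ * (w i) ^ (b - 1) *
      Real.exp (-(a * (w i) ^ b * (Real.exp (c * (w i) ^ d) - 1)) + c * (w i) ^ d) *
      (1 + (c * d / b) * (w i) ^ d - Real.exp (-(c * (w i) ^ d))) *
      (G a b c d (w i)) ^ (α₁ + α₂ + α₃ - 1)) =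
      lC (w i) + Real.log α₃ + (α₁ + α₂ + α₃ - 1) * lG (w i) := by
    intro i
    exact log_wterm ha hb hc hd h3 (hw i)
  rw [Finset.sum_congr rfl (fun i _ => e1 i), Finset.sum_congr rfl (fun i _ => e2 i),
    Finset.sum_congr rfl (fun i _ => e3 i)]
  simp only [Finset.sum_add_distrib, Finset.sum_sub_distrib, ← Finset.mul_sum,
    Finset.sum_const, Finset.card_univ, Fintype.card_fin, nsmul_eq_mul]
  ring

/-- derivative of a sum of shifted logs plus a linear term -/
lemma deriv_logshape (p₁ p₂ p₃ r₁ r₂ r₃ m k y : ℝ)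
    (h₁ : y + r₁ ≠ 0) (h₂ : y + r₂ ≠ 0) (h₃ : y + r₃ ≠ 0) :
    deriv (fun z => p₁ * Real.log (z + r₁) + p₂ * Real.log (z + r₂) +
      p₃ * Real.log (z + r₃) + z * m + k) y =
      p₁ / (y + r₁) + p₂ / (y + r₂) + p₃ / (y + r₃) + m := by
  have H : HasDerivAt (fun z => p₁ * Real.log (z + r₁) + p₂ * Real.log (z + r₂) +
      p₃ * Real.log (z + r₃) + z * m + k)
      (p₁ * (1 / (y + r₁)) + p₂ * (1 / (y + r₂)) + p₃ * (1 / (y + r₃)) + 1 * m) y := by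
    exact (((((((hasDerivAt_id y).add_const r₁).log h₁).const_mul p₁).add
      ((((hasDerivAt_id y).add_const r₂).log h₂).const_mul p₂)).add
      ((((hasDerivAt_id y).add_const r₃).log h₃).const_mul p₃)).add
      ((hasDerivAt_id y).mul_const m)).add_const k
  rw [H.deriv]; ring

/-- derivative of a sum of shifted inverses -/
lemma deriv_invshape (p₁ p₂ p₃ r₁ r₂ r₃ m y : ℝ)
    (h₁ : y + r₁ ≠ 0) (h₂ : y + r₂ ≠ 0) (h₃ : y + r₃ ≠ 0) :
    deriv (fun z => p₁ / (z + r₁) + p₂ / (z + r₂) + p₃ / (z + r₃) + m) y =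
      -(p₁ / (y + r₁) ^ 2) - p₂ / (y + r₂) ^ 2 - p₃ / (y + r₃) ^ 2 := by
  have H : HasDerivAt (fun z => p₁ / (z + r₁) + p₂ / (z + r₂) + p₃ / (z + r₃) + m)
      (p₁ * (-1 / (y + r₁) ^ 2) + p₂ * (-1 / (y + r₂) ^ 2) + p₃ * (-1 / (y + r₃) ^ 2)) y := by
    have g1 := (((hasDerivAt_id y).add_const r₁).inv h₁).const_mul p₁
    have g2 := (((hasDerivAt_id y).add_const r₂).inv h₂).const_mul p₂
    have g3 := (((hasDerivAt_id y).add_const r₃).inv h₃).const_mul p₃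
    simp only [div_eq_mul_inv]
    exact ((g1.add g2).add g3).add_const m
  rw [H.deriv]; ring

theorem stmt_19 (a b c d : ℝ) (ha : 0 < a) (hb : 0 < b) (hc : 0 < c) (hd : 0 < d)
    {n₁ n₂ n₃ : ℕ} (s t : Fin n₁ → ℝ) (u v : Fin n₂ → ℝ) (w : Fin n₃ → ℝ)
    (hst : ∀ i, 0 < s i ∧ s i < t i) (hvu : ∀ i, 0 < v i ∧ v i < u i)
    (hw : ∀ i, 0 < w i)
    (α₁ α₂ α₃ : ℝ) (hα₁ : 0 < α₁) (hα₂ : 0 < α₂) (hα₃ : 0 < α₃) :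
    deriv (fun x₁ : ℝ => deriv (fun y₁ : ℝ => logLik a b c d s t u v w y₁ α₂ α₃) x₁) α₁ =
        -((n₁ : ℝ) / (α₁ + α₃) ^ 2 + (n₂ : ℝ) / α₁ ^ 2) ∧
    deriv (fun x₂ : ℝ => deriv (fun y₂ : ℝ => logLik a b c d s t u v w α₁ y₂ α₃) x₂) α₂ =
        -((n₁ : ℝ) / α₂ ^ 2 + (n₂ : ℝ) / (α₂ + α₃) ^ 2) ∧
    deriv (fun x₃ : ℝ => deriv (fun y₃ : ℝ => logLik a b c d s t u v w α₁ α₂ y₃) x₃) α₃ =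
        -((n₁ : ℝ) / (α₁ + α₃) ^ 2 + (n₂ : ℝ) / (α₂ + α₃) ^ 2 + (n₃ : ℝ) / α₃ ^ 2) ∧
    deriv (fun x₂ : ℝ => deriv (fun y₁ : ℝ => logLik a b c d s t u v w y₁ x₂ α₃) α₁) α₂ =
        0 ∧
    deriv (fun x₃ : ℝ => deriv (fun y₁ : ℝ => logLik a b c d s t u v w y₁ α₂ x₃) α₁) α₃ =
        -((n₁ : ℝ) / (α₁ + α₃) ^ 2) ∧
    deriv (fun x₃ : ℝ => deriv (fun y₂ : ℝ => logLik a b c d s t u v w α₁ y₂ x₃) α₂) α₃ =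
        -((n₂ : ℝ) / (α₂ + α₃) ^ 2) := by
  obtain ⟨A, B, C, K, hdec⟩ := loglik_decomp a b c d ha hb hc hd s t u v w hst hvu hw
  -- First partial in α₁
  have P1 : ∀ x₁ x₂ x₃ : ℝ, 0 < x₁ → 0 < x₂ → 0 < x₃ →
      deriv (fun y => logLik a b c d s t u v w y x₂ x₃) x₁ =
        (n₁ : ℝ) / (x₁ + x₃) + (n₂ : ℝ) / x₁ + A := by
    intro x₁ x₂ x₃ h1 h2 h3
    have heq : (fun y => logLik a b c d s t u v w y x₂ x₃) =ᶠ[nhds x₁]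
        (fun z => (n₁ : ℝ) * Real.log (z + x₃) + (n₂ : ℝ) * Real.log (z + 0) +
          0 * Real.log (z + 1) + z * A +
          ((n₁ : ℝ) * Real.log x₂ + (n₂ : ℝ) * Real.log (x₂ + x₃) +
            (n₃ : ℝ) * Real.log x₃ + x₂ * B + x₃ * C + K)) := by
      filter_upwards [eventually_gt_nhds h1] with z hz
      rw [hdec z x₂ x₃ hz h2 h3]
      ring_nf
    rw [heq.deriv_eq, deriv_logshape _ _ _ _ _ _ _ _ _
      (by positivity) (by simpa using h1.ne') (by positivity)]
    ring
  -- First partial in α₂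
  have P2 : ∀ x₁ x₂ x₃ : ℝ, 0 < x₁ → 0 < x₂ → 0 < x₃ →
      deriv (fun y => logLik a b c d s t u v w x₁ y x₃) x₂ =
        (n₁ : ℝ) / x₂ + (n₂ : ℝ) / (x₂ + x₃) + B := by
    intro x₁ x₂ x₃ h1 h2 h3
    have heq : (fun y => logLik a b c d s t u v w x₁ y x₃) =ᶠ[nhds x₂]
        (fun z => (n₁ : ℝ) * Real.log (z + 0) + (n₂ : ℝ) * Real.log (z + x₃) +
          0 * Real.log (z + 1) + z * B +
          ((n₁ : ℝ) * Real.log (x₁ + x₃) + (n₂ : ℝ) * Real.log x₁ +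
            (n₃ : ℝ) * Real.log x₃ + x₁ * A + x₃ * C + K)) := by
      filter_upwards [eventually_gt_nhds h2] with z hz
      rw [hdec x₁ z x₃ h1 hz h3]
      ring_nf
    rw [heq.deriv_eq, deriv_logshape _ _ _ _ _ _ _ _ _
      (by simpa using h2.ne') (by positivity) (by positivity)]
    ring
  -- First partial in α₃
  have P3 : ∀ x₁ x₂ x₃ : ℝ, 0 < x₁ → 0 < x₂ → 0 < x₃ →
      deriv (fun y => logLik a b c d s t u v w x₁ x₂ y) x₃ =
        (n₁ : ℝ) / (x₃ + x₁) + (n₂ : ℝ) / (x₃ + x₂) + (n₃ : ℝ) / x₃ + C := by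
    intro x₁ x₂ x₃ h1 h2 h3
    have heq : (fun y => logLik a b c d s t u v w x₁ x₂ y) =ᶠ[nhds x₃]
        (fun z => (n₁ : ℝ) * Real.log (z + x₁) + (n₂ : ℝ) * Real.log (z + x₂) +
          (n₃ : ℝ) * Real.log (z + 0) + z * C +
          ((n₁ : ℝ) * Real.log x₂ + (n₂ : ℝ) * Real.log x₁ + x₁ * A + x₂ * B + K)) := by
      filter_upwards [eventually_gt_nhds h3] with z hz
      rw [hdec x₁ x₂ z h1 h2 hz]
      ring_nf
    rw [heq.deriv_eq, deriv_logshape _ _ _ _ _ _ _ _ _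
      (by positivity) (by positivity) (by simpa using h3.ne')]
    ring
  refine ⟨?_, ?_, ?_, ?_, ?_, ?_⟩
  · -- ∂²/∂α₁²
    have heq : (fun x => deriv (fun y => logLik a b c d s t u v w y α₂ α₃) x) =ᶠ[nhds α₁]
        (fun z => (n₁ : ℝ) / (z + α₃) + (n₂ : ℝ) / (z + 0) + 0 / (z + 1) + A) := by
      filter_upwards [eventually_gt_nhds hα₁] with z hz
      rw [P1 z α₂ α₃ hz hα₂ hα₃]; ring_nf
    rw [heq.deriv_eq, deriv_invshape _ _ _ _ _ _ _ _
      (by positivity) (by simpa using hα₁.ne') (by positivity)]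
    ring
  · -- ∂²/∂α₂²
    have heq : (fun x => deriv (fun y => logLik a b c d s t u v w α₁ y α₃) x) =ᶠ[nhds α₂]
        (fun z => (n₁ : ℝ) / (z + 0) + (n₂ : ℝ) / (z + α₃) + 0 / (z + 1) + B) := by
      filter_upwards [eventually_gt_nhds hα₂] with z hz
      rw [P2 α₁ z α₃ hα₁ hz hα₃]; ring_nf
    rw [heq.deriv_eq, deriv_invshape _ _ _ _ _ _ _ _
      (by simpa using hα₂.ne') (by positivity) (by positivity)]
    ring
  · -- ∂²/∂α₃²
    have heq : (fun x => deriv (fun y => logLik a b c d s t u v w α₁ α₂ y) x) =ᶠ[nhds α₃]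
        (fun z => (n₁ : ℝ) / (z + α₁) + (n₂ : ℝ) / (z + α₂) + (n₃ : ℝ) / (z + 0) + C) := by
      filter_upwards [eventually_gt_nhds hα₃] with z hz
      rw [P3 α₁ α₂ z hα₁ hα₂ hz]; ring_nf
    rw [heq.deriv_eq, deriv_invshape _ _ _ _ _ _ _ _
      (by positivity) (by positivity) (by simpa using hα₃.ne')]
    ring
  · -- ∂²/∂α₁∂α₂ = 0
    have heq : (fun x => deriv (fun y => logLik a b c d s t u v w y x α₃) α₁) =ᶠ[nhds α₂]
        (fun _ : ℝ => (n₁ : ℝ) / (α₁ + α₃) + (n₂ : ℝ) / α₁ + A) := by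
      filter_upwards [eventually_gt_nhds hα₂] with z hz
      rw [P1 α₁ z α₃ hα₁ hz hα₃]
    rw [heq.deriv_eq, deriv_const]
  · -- ∂²/∂α₁∂α₃
    have heq : (fun x => deriv (fun y => logLik a b c d s t u v w y α₂ x) α₁) =ᶠ[nhds α₃]
        (fun z => (n₁ : ℝ) / (z + α₁) + 0 / (z + 1) + 0 / (z + 1) +
          ((n₂ : ℝ) / α₁ + A)) := by
      filter_upwards [eventually_gt_nhds hα₃] with z hz
      rw [P1 α₁ α₂ z hα₁ hα₂ hz]; ring_nf
    rw [heq.deriv_eq, deriv_invshape _ _ _ _ _ _ _ _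
      (by positivity) (by positivity) (by positivity)]
    ring_nf
  · -- ∂²/∂α₂∂α₃
    have heq : (fun x => deriv (fun y => logLik a b c d s t u v w α₁ y x) α₂) =ᶠ[nhds α₃]
        (fun z => (n₂ : ℝ) / (z + α₂) + 0 / (z + 1) + 0 / (z + 1) +
          ((n₁ : ℝ) / α₂ + B)) := by
      filter_upwards [eventually_gt_nhds hα₃] with z hz
      rw [P2 α₁ α₂ z hα₁ hα₂ hz]; ring_nf
    rw [heq.deriv_eq, deriv_invshape _ _ _ _ _ _ _ _
      (by positivity) (by positivity) (by positivity)]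
    ring_nf
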